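/- Let D be the improved digraph whose associated undirected graph F is a forest, let T be a negative tree of D, and assume c is nearly conservative on D. Then for any two vertices s,t ∈ V(T), the minimum weight of a directed path from s to t in D equals d^T(s,t), the weight of the unique directed path from s to t using only arcs of A(T). -/

import Mathlib

namespace NearlyConservativePaper

variable {V : Type} [Fintype V] [DecidableEq V]

/-- A weighted digraph given by adjacency and arc weights. -/
structure WDigraph (V : Type) where
  Adj : V → V → Prop
  c : V → V → ℝ

/-- A step `(u, v, b)` of a walk: `b = false` means an original arc from `u` to `v`,
`b = true` means the added loose arc from `u` to `v`. -/
abbrev Step (V : Type) := V × V × Bool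

/-- `IsWalk AS s t l`: `l` is a walk from `s` to `t` using arcs allowed by `AS`. -/
def IsWalk (AS : V → V → Bool → Prop) : V → V → List (Step V) → Prop
  | s, t, [] => s = t
  | s, t, (u, v, b) :: l => u = s ∧ AS u v b ∧ IsWalk AS v t l

/-- The list of head-vertices of the steps of a walk. -/
def heads (l : List (Step V)) : List V := l.map fun a => a.2.1

/-- Total weight of a walk with respect to the step-weight `w`. -/
def wSum (w : V → V → Bool → ℝ) (l : List (Step V)) : ℝ :=
  (l.map fun a => w a.1 a.2.1 a.2.2).sum

/-- A directed cycle: a nonempty closed walk whose vertices are pairwise distinct. -/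
def IsCycle (AS : V → V → Bool → Prop) (s : V) (l : List (Step V)) : Prop :=
  IsWalk AS s s l ∧ l ≠ [] ∧ (heads l).Nodup

/-- A directed (simple) path. -/
def IsPath (AS : V → V → Bool → Prop) (s t : V) (l : List (Step V)) : Prop :=
  IsWalk AS s t l ∧ (s :: heads l).Nodup

/-- Nearly conservative: every negative directed cycle consists of exactly two arcs. -/
def NearlyCons (AS : V → V → Bool → Prop) (w : V → V → Bool → ℝ) : Prop :=
  ∀ s l, IsCycle AS s l → wSum w l < 0 → l.length = 2

/-- Minimum weight of a directed path from `s` to `t`, `+∞` if there is none. -/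
noncomputable def distW (AS : V → V → Bool → Prop) (w : V → V → Bool → ℝ)
    (s t : V) : EReal :=
  sInf {x : EReal | ∃ l, IsPath AS s t l ∧ (wSum w l : EReal) = x}

namespace WDigraph

variable (D : WDigraph V)

/-- The arc `uv` is special if `vu` is also an arc and `c(uv) + c(vu) < 0`. -/
def Special (u v : V) : Prop := D.Adj u v ∧ D.Adj v u ∧ D.c u v + D.c v u < 0

/-- The arcs of the original digraph `D` (only `b = false` steps). -/
def baseArcs (u v : V) (b : Bool) : Prop := b = false ∧ D.Adj u v

/-- The arcs of the improved digraph: original arcs and, for every special arc `vu`,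
an added loose ordinary arc from `u` to `v`. -/
def ImpArc (u v : V) (b : Bool) : Prop := if b then D.Special v u else D.Adj u v

/-- The weight of a step of the improved digraph: the loose arc added for the
special arc `vu` has weight `-c(vu)`. -/
def impW (u v : V) (b : Bool) : ℝ := if b then -(D.c v u) else D.c u v

/-- A walk is special-simple if it contains every special arc at most once and never
contains both a special arc and its opposite. -/
def SpecialSimple (l : List (Step V)) : Prop :=
  ∀ u v, D.Special u v → l.count (u, v, false) + l.count (v, u, false) ≤ 1

/-- The associated undirected graph `F`. -/
def F : SimpleGraph V where
  Adj u v := u ≠ v ∧ D.Special u v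
  symm := by
    constructor
    rintro u v ⟨hne, h1, h2, h3⟩
    exact ⟨hne.symm, h2, h1, by linarith⟩
  loopless := by constructor; rintro u ⟨hne, -⟩; exact hne rfl

/-- The weight of a walk of `F`, each edge being traversed as the special arc pointing
in the direction of the traversal. -/
def fWeight {s t : V} (p : D.F.Walk s t) : ℝ :=
  (p.darts.map fun d => D.c d.toProd.1 d.toProd.2).sum

/-- The improved digraph with the original (special) arcs in `Rem` removed. -/
def arcsMinus (Rem : V → V → Prop) (u v : V) (b : Bool) : Prop :=
  D.ImpArc u v b ∧ ¬ (b = false ∧ Rem u v)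

end WDigraph

/-- The special arcs of the negative tree containing `t₀` (to be removed from `D`). -/
def remT (D : WDigraph V) (t₀ : V) : V → V → Prop :=
  fun x y => D.F.Adj x y ∧ D.F.Reachable t₀ x

section Aux

variable {AS : V → V → Bool → Prop} {w : V → V → Bool → ℝ}

lemma wSum_nil : wSum w ([] : List (Step V)) = 0 := rfl

lemma wSum_cons (a : Step V) (l : List (Step V)) :
    wSum w (a :: l) = w a.1 a.2.1 a.2.2 + wSum w l := by
  simp [wSum]

lemma wSum_append (l1 l2 : List (Step V)) :
    wSum w (l1 ++ l2) = wSum w l1 + wSum w l2 := by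
  simp [wSum]

lemma heads_cons (a : Step V) (l : List (Step V)) :
    heads (a :: l) = a.2.1 :: heads l := rfl

lemma isWalk_cons_iff {s t : V} {a : Step V} {l : List (Step V)} :
    IsWalk AS s t (a :: l) ↔ a.1 = s ∧ AS a.1 a.2.1 a.2.2 ∧ IsWalk AS a.2.1 t l := by
  obtain ⟨u, v, b⟩ := a
  rfl

lemma isWalk_append : ∀ (l1 : List (Step V)) {s m t : V} {l2 : List (Step V)},
    IsWalk AS s m l1 → IsWalk AS m t l2 → IsWalk AS s t (l1 ++ l2) := by
  intro l1
  induction l1 with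
  | nil =>
    intro s m t l2 h1 h2
    have hsm : s = m := h1
    rw [List.nil_append, hsm]; exact h2
  | cons a l ih =>
    intro s m t l2 h1 h2
    rw [isWalk_cons_iff] at h1
    obtain ⟨ha1, ha2, ha3⟩ := h1
    exact isWalk_cons_iff.mpr ⟨ha1, ha2, ih ha3 h2⟩

lemma isWalk_append_split : ∀ (l1 : List (Step V)) {s t : V} {l2 : List (Step V)},
    IsWalk AS s t (l1 ++ l2) → ∃ m, IsWalk AS s m l1 ∧ IsWalk AS m t l2 := by
  intro l1
  induction l1 with
  | nil => intro s t l2 h; exact ⟨s, rfl, h⟩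
  | cons a l ih =>
    intro s t l2 h
    rw [List.cons_append, isWalk_cons_iff] at h
    obtain ⟨ha1, ha2, ha3⟩ := h
    obtain ⟨m, hm1, hm2⟩ := ih ha3
    exact ⟨m, isWalk_cons_iff.mpr ⟨ha1, ha2, hm1⟩, hm2⟩

/-- Splitting a list whose image under `f` has a duplicate. -/
lemma exists_dup_split {α β : Type*} (f : α → β) :
    ∀ (l : List α), ¬ (l.map f).Nodup →
    ∃ (l1 : List α) (a : α) (l2 : List α) (b : α) (l3 : List α), l = l1 ++ a :: (l2 ++ b :: l3) ∧ f a = f b := by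
  intro l
  induction l with
  | nil => intro h; exact absurd List.nodup_nil h
  | cons x l ih =>
    intro h
    rw [List.map_cons, List.nodup_cons] at h
    by_cases hx : f x ∈ l.map f
    · obtain ⟨b, hb, hfb⟩ := List.mem_map.mp hx
      obtain ⟨l2, l3, rfl⟩ := List.append_of_mem hb
      exact ⟨[], x, l2, b, l3, rfl, hfb.symm⟩
    · have h' : ¬ (l.map f).Nodup := fun hn => h ⟨hx, hn⟩
      obtain ⟨l1, a, l2, b, l3, rfl, hab⟩ := ih h'
      exact ⟨x :: l1, a, l2, b, l3, rfl, hab⟩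

/-- A negative closed walk contains a negative cycle (whose steps all come
from the walk). -/
lemma exists_neg_cycle :
    ∀ (n : ℕ) (l : List (Step V)), l.length ≤ n → ∀ (s : V), IsWalk AS s s l →
    wSum w l < 0 →
    ∃ s' l', IsCycle AS s' l' ∧ wSum w l' < 0 ∧ ∀ x ∈ l', x ∈ l := by
  intro n
  induction n with
  | zero =>
    intro l hl s _ hneg
    rw [Nat.le_zero, List.length_eq_zero_iff] at hl
    subst hl
    rw [wSum_nil] at hneg
    exact absurd hneg (by norm_num)
  | succ n ih =>
    intro l hl s hw hneg
    by_cases hd : (heads l).Nodup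
    · have hne : l ≠ [] := by
        rintro rfl
        rw [wSum_nil] at hneg
        exact absurd hneg (by norm_num)
      exact ⟨s, l, ⟨hw, hne, hd⟩, hneg, fun x h => h⟩
    · obtain ⟨l1, a, l2, b, l3, rfl, hab⟩ := exists_dup_split _ l hd
      obtain ⟨m1, w1, w2⟩ := isWalk_append_split l1 hw
      rw [isWalk_cons_iff] at w2
      obtain ⟨ha1, ha2, w3⟩ := w2
      obtain ⟨m2, w4, w5⟩ := isWalk_append_split l2 w3
      rw [isWalk_cons_iff] at w5
      obtain ⟨hb1, hb2, w6⟩ := w5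
      -- middle closed walk at v := a.2.1
      have hmid : IsWalk AS a.2.1 a.2.1 (l2 ++ [b]) :=
        isWalk_append l2 w4 (isWalk_cons_iff.mpr ⟨hb1, hb2, hab.symm⟩)
      -- outer closed walk at s
      have hout : IsWalk AS s s (l1 ++ a :: l3) :=
        isWalk_append l1 w1 (isWalk_cons_iff.mpr ⟨ha1, ha2, hab ▸ w6⟩)
      have hsum : wSum w (l1 ++ a :: (l2 ++ b :: l3))
          = wSum w (l1 ++ a :: l3) + wSum w (l2 ++ [b]) := by
        simp only [wSum_append, wSum_cons, wSum_nil]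
        ring
      have hlen : (l1 ++ a :: (l2 ++ b :: l3)).length
          = (l1 ++ a :: l3).length + (l2 ++ [b]).length := by
        simp; omega
      rcases lt_or_ge (wSum w (l2 ++ [b])) 0 with hc | hc
      · have hlen2 : (l2 ++ [b]).length ≤ n := by
          simp at hlen hl ⊢; omega
        obtain ⟨s', l', hcyc, hneg', hsub⟩ := ih (l2 ++ [b]) hlen2 _ hmid hc
        refine ⟨s', l', hcyc, hneg', fun x hx => ?_⟩
        have := hsub x hx
        simp only [List.mem_append, List.mem_cons] at this ⊢
        tauto
      · have hc2 : wSum w (l1 ++ a :: l3) < 0 := by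
          rw [hsum] at hneg; linarith
        have hlen2 : (l1 ++ a :: l3).length ≤ n := by
          simp at hl ⊢; omega
        obtain ⟨s', l', hcyc, hneg', hsub⟩ := ih (l1 ++ a :: l3) hlen2 _ hout hc2
        refine ⟨s', l', hcyc, hneg', fun x hx => ?_⟩
        have := hsub x hx
        simp only [List.mem_append, List.mem_cons] at this ⊢
        tauto

/-- A directed path cannot contain a step from `u` to `v` and also a step
from `v` to `u`. -/
lemma path_no_two_way :
    ∀ (l : List (Step V)) {s t : V}, IsWalk AS s t l → (s :: heads l).Nodup →
    ∀ (u v : V) (b1 b2 : Bool), (u, v, b1) ∈ l → (v, u, b2) ∈ l → False := by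
  intro l
  induction l with
  | nil => intro s t _ _ u v b1 b2 h1 _; exact absurd h1 List.not_mem_nil
  | cons c l ih =>
    intro s t hw hnd u v b1 b2 h1 h2
    rw [isWalk_cons_iff] at hw
    obtain ⟨hc1, hc2, hc3⟩ := hw
    rw [heads_cons] at hnd
    have hs_not : s ∉ c.2.1 :: heads l := (List.nodup_cons.mp hnd).1
    rcases List.mem_cons.mp h1 with e1 | m1
    · -- c = (u, v, b1) : s = u
      subst e1
      have hsu : u = s := hc1
      rcases List.mem_cons.mp h2 with e2 | m2
      · -- the two steps coincide, so u = v
        have hvu : v = u := congrArg Prod.fst e2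
        apply hs_not
        have hsv : s = v := by rw [hvu, hsu]
        show s ∈ v :: heads l
        rw [hsv]
        exact List.mem_cons_self
      · -- (v,u,b2) ∈ l so u ∈ heads l
        have hu : u ∈ heads l := List.mem_map_of_mem (f := fun a : Step V => a.2.1) m2
        apply hs_not
        show s ∈ v :: heads l
        rw [← hsu]
        exact List.mem_cons_of_mem _ hu
    · rcases List.mem_cons.mp h2 with e2 | m2
      · -- c = (v, u, b2) : s = v and v ∈ heads l
        subst e2
        have hvs : v = s := hc1
        have hv : v ∈ heads l := List.mem_map_of_mem (f := fun a : Step V => a.2.1) m1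
        apply hs_not
        show s ∈ u :: heads l
        rw [← hvs]
        exact List.mem_cons_of_mem _ hv
      · exact ih hc3 ((List.nodup_cons.mp hnd).2) u v b1 b2 m1 m2

end Aux

/-- The tree path as a list of (ordinary) steps in the improved digraph. -/
def toSteps (D : WDigraph V) {s t : V} (p : D.F.Walk s t) : List (Step V) :=
  p.darts.map fun d => (d.toProd.1, d.toProd.2, false)

/-- The reverse of the tree path, traversed along loose arcs. -/
def looseRev (D : WDigraph V) {s t : V} (p : D.F.Walk s t) : List (Step V) :=
  p.darts.reverse.map fun d => (d.toProd.2, d.toProd.1, true)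

lemma adj_of_F_adj (D : WDigraph V) {u v : V} (h : D.F.Adj u v) : D.Adj u v :=
  h.2.1

lemma special_of_F_adj (D : WDigraph V) {u v : V} (h : D.F.Adj u v) :
    D.Special u v := h.2

lemma isWalk_toSteps (D : WDigraph V) {s t : V} (p : D.F.Walk s t) :
    IsWalk D.ImpArc s t (toSteps D p) := by
  induction p with
  | nil => exact rfl
  | cons h q ih =>
    rw [toSteps, SimpleGraph.Walk.darts_cons, List.map_cons]
    refine isWalk_cons_iff.mpr ⟨rfl, ?_, ih⟩
    simpa [WDigraph.ImpArc] using adj_of_F_adj D h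

lemma heads_toSteps (D : WDigraph V) {s t : V} (p : D.F.Walk s t) :
    heads (toSteps D p) = p.support.tail := by
  rw [heads, toSteps, List.map_map]
  exact p.map_snd_darts

lemma wSum_toSteps (D : WDigraph V) {s t : V} (p : D.F.Walk s t) :
    wSum D.impW (toSteps D p) = D.fWeight p := by
  rw [wSum, toSteps, List.map_map, WDigraph.fWeight]
  refine congrArg List.sum (List.map_congr_left fun d _ => ?_)
  simp [WDigraph.impW]

lemma isWalk_looseRev (D : WDigraph V) {s t : V} (p : D.F.Walk s t) :
    IsWalk D.ImpArc t s (looseRev D p) := by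
  induction p with
  | nil => exact rfl
  | @cons u m t h q ih =>
    rw [looseRev, SimpleGraph.Walk.darts_cons, List.reverse_cons, List.map_append]
    refine isWalk_append _ ih ?_
    refine isWalk_cons_iff.mpr ⟨rfl, ?_, rfl⟩
    simpa [WDigraph.ImpArc] using special_of_F_adj D h

lemma wSum_looseRev (D : WDigraph V) {s t : V} (p : D.F.Walk s t) :
    wSum D.impW (looseRev D p) = -(D.fWeight p) := by
  rw [wSum, looseRev, List.map_map, WDigraph.fWeight]
  have : ((fun a : Step V => D.impW a.1 a.2.1 a.2.2) ∘
      fun d : D.F.Dart => (d.toProd.2, d.toProd.1, true))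
      = fun d : D.F.Dart => -(D.c d.toProd.1 d.toProd.2) := by
    funext d
    simp [WDigraph.impW]
  rw [this, List.map_reverse, List.sum_reverse]
  induction p.darts with
  | nil => simp
  | cons d ds ih => simp [ih]; ring

lemma looseRev_true (D : WDigraph V) {s t : V} (p : D.F.Walk s t) :
    ∀ x ∈ looseRev D p, x.2.2 = true := by
  intro x hx
  rw [looseRev, List.mem_map] at hx
  obtain ⟨d, _, rfl⟩ := hx
  rfl

/-- Let `T` be the negative tree of the forest `F` containing `t₀`, and assume
`c` is nearly conservative on the improved digraph `D`.  For any `s, t ∈ V(T)`, the minimum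
weight of a directed path from `s` to `t` in `D` equals `d^T(s,t)`, the weight of the
(unique) path from `s` to `t` inside `A(T)`. -/
theorem statement_3 {V : Type} [Fintype V] [DecidableEq V] (D : WDigraph V)
    (hloop : ∀ v, ¬ D.Adj v v) (hforest : D.F.IsAcyclic)
    (hnc : NearlyCons D.ImpArc D.impW)
    (t₀ : V) (hT : ∃ y, D.F.Adj t₀ y)
    (s t : V) (hs : D.F.Reachable t₀ s) (ht : D.F.Reachable t₀ t)
    (p : D.F.Walk s t) (hp : p.IsPath) :
    distW D.ImpArc D.impW s t = (D.fWeight p : EReal) := by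
  rw [distW]
  apply le_antisymm
  · -- the tree path itself is a path in the improved digraph
    apply sInf_le
    refine ⟨toSteps D p, ⟨isWalk_toSteps D p, ?_⟩, by rw [wSum_toSteps]⟩
    rw [heads_toSteps, ← SimpleGraph.Walk.support_eq_cons]
    exact hp.support_nodup
  · -- every path has weight at least `fWeight p`
    apply le_sInf
    rintro x ⟨l, ⟨hw, hnd⟩, rfl⟩
    rw [EReal.coe_le_coe_iff]
    by_contra hlt
    push_neg at hlt
    -- close up the walk with the loose reverse of the tree path
    have hC : IsWalk D.ImpArc s s (l ++ looseRev D p) :=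
      isWalk_append l hw (isWalk_looseRev D p)
    have hCneg : wSum D.impW (l ++ looseRev D p) < 0 := by
      rw [wSum_append, wSum_looseRev]; linarith
    obtain ⟨s', l', hcyc, hneg, hsub⟩ :=
      exists_neg_cycle (l ++ looseRev D p).length _ le_rfl s hC hCneg
    have hlen := hnc s' l' hcyc hneg
    obtain ⟨a, b, rfl⟩ := List.length_eq_two.mp hlen
    obtain ⟨hcw, -, hch⟩ := hcyc
    obtain ⟨u1, v1, t1⟩ := a
    obtain ⟨u2, v2, t2⟩ := b
    obtain ⟨hA1, hA2, hB1, hB2, hB3⟩ :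
        u1 = s' ∧ D.ImpArc u1 v1 t1 ∧ u2 = v1 ∧ D.ImpArc u2 v2 t2 ∧ v2 = s' := hcw
    have hv2 : v2 = u1 := by rw [hB3, ← hA1]
    rw [hB1, hv2] at hB2 hneg hsub
    -- the two-step cycle is u1 → v1 → u1
    have hwsum : D.impW u1 v1 t1 + D.impW v1 u1 t2 < 0 := by
      simp only [wSum, List.map_cons, List.map_nil, List.sum_cons, List.sum_nil] at hneg
      simpa using hneg
    have hmem1 := hsub _ List.mem_cons_self
    have hmem2 := hsub _ (List.mem_cons_of_mem _ List.mem_cons_self)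
    cases t1 with
    | false =>
      cases t2 with
      | false =>
        -- two ordinary arcs: both must come from the path `l`
        have h1 : (u1, v1, false) ∈ l := by
          rcases List.mem_append.mp hmem1 with h | h
          · exact h
          · exact absurd (looseRev_true D p _ h) (by simp)
        have h2 : (v1, u1, false) ∈ l := by
          rcases List.mem_append.mp hmem2 with h | h
          · exact h
          · exact absurd (looseRev_true D p _ h) (by simp)
        exact path_no_two_way l hw hnd u1 v1 false false h1 h2
      | true =>
        -- ordinary arc u1→v1 plus loose arc v1→u1: weight 0
        simp only [WDigraph.impW, if_true, Bool.false_eq_true, if_false] at hwsum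
        linarith
    | true =>
      cases t2 with
      | false =>
        simp only [WDigraph.impW, if_true, Bool.false_eq_true, if_false] at hwsum
        linarith
      | true =>
        -- two loose arcs: the corresponding special arcs give a positive sum
        have hS : D.Special v1 u1 := by simpa [WDigraph.ImpArc] using hA2
        have h3 := hS.2.2
        simp only [WDigraph.impW, if_true] at hwsum
        linarith

end NearlyConservativePaper
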